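/- Let τ ≥ 2 and γ ∈ (0,1), and let K_{γ,τ} = { irrational x ∈ ℝ : q_{k+1}(x) ≤ γ^{−1} q_k(x)^{τ−1} for all k ≥ 0 }. Then sup_{x ∈ K_{γ,τ}} Σ_{k≥n} (log a_{k+1}(x))/q_k(x) → 0 as n → ∞. In particular there exists a decreasing sequence (M_n) of positive reals with M_n → 0, depending only on γ and τ, such that K_{γ,τ} ⊆ { irrational x : Σ_{k≥n} (log a_{k+1}(x))/q_k(x) ≤ M_n for all n }; and every x ∈ K_{γ,τ} satisfies B(x) < +∞. -/

import Mathlib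

open scoped ENNReal Topology

noncomputable def gaussIter (x : ℝ) : ℕ → ℝ
  | 0 => Int.fract x
  | n + 1 => Int.fract (gaussIter x n)⁻¹

noncomputable def pquot (x : ℝ) : ℕ → ℤ
  | 0 => ⌊x⌋
  | n + 1 => ⌊(gaussIter x n)⁻¹⌋

noncomputable def qden (x : ℝ) : ℕ → ℤ
  | 0 => 1
  | 1 => pquot x 1
  | n + 2 => pquot x (n + 2) * qden x (n + 1) + qden x n

noncomputable def pnum (x : ℝ) : ℕ → ℤ
  | 0 => pquot x 0
  | 1 => pquot x 1 * pquot x 0 + 1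
  | n + 2 => pquot x (n + 2) * pnum x (n + 1) + pnum x n

noncomputable def brjunoTerm (x : ℝ) (k : ℕ) : ℝ :=
  Real.log (pquot x (k + 1)) / (qden x k : ℝ)

open Classical in
noncomputable def brjuno (x : ℝ) : ℝ≥0∞ :=
  if Irrational x then ∑' k, ENNReal.ofReal (brjunoTerm x k) else ⊤

noncomputable def brjunoTailE (x : ℝ) (n : ℕ) : ℝ≥0∞ :=
  ∑' k, ENNReal.ofReal (brjunoTerm x (n + k))

noncomputable def cfLen (x : ℝ) : ℕ := sInf {n | gaussIter x n = 0}

noncomputable def brjunoFinite (x : ℝ) : ℝ :=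
  ∑ k ∈ Finset.range (cfLen x), Real.log (pquot x (k + 1)) / (qden x k : ℝ)

def brjunoSuper (t : ℝ) : Set ℝ := {x | ENNReal.ofReal t < brjuno x}

def IsCompOf (A : Set ℝ) (a b : ℝ) : Prop := ∃ x ∈ A, connectedComponentIn A x = Set.Ioo a b

def diamond (κ a b : ℝ) : Set ℂ :=
  {z : ℂ | a < z.re ∧ z.re < b ∧ |z.im| ≤ κ * min (z.re - a) (b - z.re)}

noncomputable def CMset (κ M : ℝ) : Set ℂ :=
  (fun ξ : ℂ => Complex.exp (2 * Real.pi * Complex.I * ξ)) ''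
    (⋃ (a : ℝ) (b : ℝ) (_ : IsCompOf (brjunoSuper M) a b), diamond κ a b)ᶜ ∪ {0}

def KstarR (Ms : ℕ → ℝ) : Set ℝ :=
  {x | Irrational x ∧ ∀ n, brjunoTailE x n ≤ ENNReal.ofReal (Ms n)}

noncomputable def CstarSet (κ : ℝ) (Ms : ℕ → ℝ) : Set ℂ :=
  (fun ξ : ℂ => Complex.exp (2 * Real.pi * Complex.I * ξ)) ''
    (⋃ (a : ℝ) (b : ℝ) (_ : IsCompOf (KstarR Ms)ᶜ a b), diamond κ a b)ᶜ ∪ {0}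

/-! On `K_{γ,τ}` we have `a_{k+1} ≤ q_{k+1} ≤ γ⁻¹ q_k^{τ-1}`, so the `k`-th Brjuno term is at most
`(log γ⁻¹ + (τ-1) log q_k) / q_k ≤ (log γ⁻¹ + 2(τ-1)) / √q_k`. Since `q_{k+2} ≥ 2 q_k`, `√q_k` grows
at least like `2^{k/4}`, so on `K_{γ,τ}` the terms are dominated by one geometric sequence, and its
tails serve as `M_n`. -/

theorem Irrational.fract {x : ℝ} (hx : Irrational x) : Irrational (Int.fract x) :=
  hx.sub_intCast ⌊x⌋

theorem Irrational.fract_pos {x : ℝ} (hx : Irrational x) : 0 < Int.fract x :=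
  Int.fract_pos.mpr (hx.ne_int _)

theorem div_le_div_sqrt_of_le_add_mul_log {y C t q : ℝ} (hC : 0 ≤ C) (ht : 0 ≤ t) (hq : 1 ≤ q)
    (hy : y ≤ C + t * Real.log q) : y / q ≤ (C + 2 * t) / √q := by
  have hr : 1 ≤ √q := Real.one_le_sqrt.mpr hq
  have hlog : Real.log q ≤ 2 * √q := by
    have := Real.log_le_sub_one_of_pos (zero_lt_one.trans_le hr)
    rw [Real.log_sqrt (zero_le_one.trans hq)] at this
    linarith
  have hqr : √q * √q = q := Real.mul_self_sqrt (zero_le_one.trans hq)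
  rw [div_le_div_iff₀ (by positivity) (by positivity)]
  calc y * √q ≤ (C + t * (2 * √q)) * √q := by gcongr; linarith [mul_le_mul_of_nonneg_left hlog ht]
    _ ≤ (C + 2 * t) * q := by
      nlinarith [mul_nonneg (mul_nonneg hC (zero_le_one.trans hr)) (sub_nonneg.mpr hr)]

theorem one_lt_sqrt_sqrt_two : 1 < √√2 :=
  Real.lt_sqrt_of_sq_lt (by simpa using Real.one_lt_sqrt_two)

theorem tsum_ofReal_le_of_le_geometric {f : ℕ → ℝ} {A ρ : ℝ} (hA : 0 ≤ A) (hρ0 : 0 ≤ ρ)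
    (hρ1 : ρ < 1) (hf : ∀ k, f k ≤ A * ρ ^ k) (n : ℕ) :
    ∑' k, ENNReal.ofReal (f (n + k)) ≤ ENNReal.ofReal (A * ρ ^ n / (1 - ρ)) :=
  calc ∑' k, ENNReal.ofReal (f (n + k)) ≤ ∑' k, ENNReal.ofReal (A * ρ ^ n * ρ ^ k) :=
        ENNReal.tsum_le_tsum fun k => ENNReal.ofReal_le_ofReal <| by
          simpa only [pow_add, mul_assoc] using hf (n + k)
    _ = ENNReal.ofReal (∑' k, A * ρ ^ n * ρ ^ k) :=
        (ENNReal.ofReal_tsum_of_nonneg (fun k => by positivity)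
          ((summable_geometric_of_lt_one hρ0 hρ1).mul_left _)).symm
    _ = ENNReal.ofReal (A * ρ ^ n / (1 - ρ)) := by
        rw [tsum_mul_left, tsum_geometric_of_lt_one hρ0 hρ1, div_eq_mul_inv]

section ContinuedFraction

variable {x : ℝ}

theorem irrational_gaussIter (hx : Irrational x) : ∀ n, Irrational (gaussIter x n)
  | 0 => hx.fract
  | n + 1 => (irrational_gaussIter hx n).inv.fract

theorem gaussIter_mem_Ioo (hx : Irrational x) (n : ℕ) : gaussIter x n ∈ Set.Ioo 0 1 := by
  cases n with
  | zero => exact ⟨hx.fract_pos, Int.fract_lt_one x⟩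
  | succ n => exact ⟨(irrational_gaussIter hx n).inv.fract_pos, Int.fract_lt_one _⟩

theorem one_le_pquot_succ (hx : Irrational x) (n : ℕ) : 1 ≤ pquot x (n + 1) := by
  obtain ⟨h0, h1⟩ := gaussIter_mem_Ioo hx n
  exact Int.le_floor.mpr (by simpa using one_le_inv₀ h0 |>.mpr h1.le)

theorem qden_add_two (n : ℕ) :
    qden x (n + 2) = pquot x (n + 2) * qden x (n + 1) + qden x n := rfl

theorem one_le_qden (hx : Irrational x) : ∀ n, 1 ≤ qden x n
  | 0 => le_rfl
  | 1 => one_le_pquot_succ hx 0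
  | n + 2 => by
    have := one_le_qden hx (n + 1)
    have := one_le_qden hx n
    have := one_le_pquot_succ hx (n + 1)
    rw [qden_add_two]
    nlinarith

theorem qden_le_qden_succ (hx : Irrational x) : ∀ n, qden x n ≤ qden x (n + 1)
  | 0 => one_le_pquot_succ hx 0
  | n + 1 => by
    have := one_le_qden hx (n + 1)
    have := one_le_qden hx n
    have := one_le_pquot_succ hx (n + 1)
    rw [qden_add_two]
    nlinarith

theorem two_mul_qden_le_qden_add_two (hx : Irrational x) (n : ℕ) :
    2 * qden x n ≤ qden x (n + 2) := by
  have := one_le_qden hx (n + 1)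
  have := qden_le_qden_succ hx n
  have := one_le_pquot_succ hx (n + 1)
  rw [qden_add_two]
  nlinarith

theorem pquot_succ_le_qden_succ (hx : Irrational x) : ∀ n, pquot x (n + 1) ≤ qden x (n + 1)
  | 0 => le_rfl
  | n + 1 => by
    have := one_le_qden hx (n + 1)
    have := one_le_qden hx n
    have := one_le_pquot_succ hx (n + 1)
    show pquot x (n + 2) ≤ qden x (n + 2)
    rw [qden_add_two]
    nlinarith

theorem sqrt_two_pow_le_two_mul_qden (hx : Irrational x) : ∀ n, √2 ^ n ≤ 2 * (qden x n : ℝ)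
  | 0 => by norm_num [qden]
  | 1 => by
    have : (1 : ℝ) ≤ qden x 1 := by exact_mod_cast one_le_qden hx 1
    have : √2 ≤ 2 := (Real.sqrt_le_left zero_le_two).mpr (by norm_num)
    linarith
  | n + 2 => by
    have := sqrt_two_pow_le_two_mul_qden hx n
    have : (2 * qden x n : ℝ) ≤ qden x (n + 2) := by
      exact_mod_cast two_mul_qden_le_qden_add_two hx n
    rw [pow_add, Real.sq_sqrt zero_le_two]
    linarith

theorem brjunoTerm_le_div_sqrt_qden {γ t : ℝ} (hx : Irrational x) (hγ0 : 0 < γ) (hγ1 : γ ≤ 1)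
    (ht : 0 ≤ t) {k : ℕ} (hk : (qden x (k + 1) : ℝ) ≤ γ⁻¹ * (qden x k : ℝ) ^ t) :
    brjunoTerm x k ≤ (Real.log γ⁻¹ + 2 * t) / √(qden x k) := by
  have hq : (1 : ℝ) ≤ qden x k := by exact_mod_cast one_le_qden hx k
  have ha : (1 : ℝ) ≤ pquot x (k + 1) := by exact_mod_cast one_le_pquot_succ hx k
  have haq : (pquot x (k + 1) : ℝ) ≤ qden x (k + 1) := by
    exact_mod_cast pquot_succ_le_qden_succ hx k
  refine div_le_div_sqrt_of_le_add_mul_log (Real.log_nonneg (one_le_inv₀ hγ0 |>.mpr hγ1)) ht hq ?_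
  calc Real.log (pquot x (k + 1)) ≤ Real.log (γ⁻¹ * (qden x k : ℝ) ^ t) :=
        Real.log_le_log (by linarith) (haq.trans hk)
    _ = Real.log γ⁻¹ + t * Real.log (qden x k) := by
        rw [Real.log_mul (by positivity) (by positivity), Real.log_rpow (by linarith)]

theorem inv_sqrt_qden_le (hx : Irrational x) (k : ℕ) :
    (√(qden x k))⁻¹ ≤ √2 * (√√2)⁻¹ ^ k := by
  have hq : (1 : ℝ) ≤ qden x k := by exact_mod_cast one_le_qden hx k
  have hgrowth : √√2 ^ k ≤ √2 * √(qden x k) := by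
    rw [← pow_le_pow_iff_left₀ (by positivity) (by positivity) two_ne_zero, ← pow_mul, mul_comm,
      pow_mul, Real.sq_sqrt (by positivity), mul_pow, Real.sq_sqrt zero_le_two,
      Real.sq_sqrt (by linarith)]
    exact sqrt_two_pow_le_two_mul_qden hx k
  rw [inv_pow, ← div_eq_mul_inv, le_div_iff₀ (by positivity), inv_mul_le_iff₀ (by positivity),
    mul_comm]
  exact hgrowth

theorem brjunoTailE_le_geometric {γ t : ℝ} (hx : Irrational x) (hγ0 : 0 < γ) (hγ1 : γ ≤ 1)
    (ht : 0 ≤ t) (hK : ∀ k : ℕ, (qden x (k + 1) : ℝ) ≤ γ⁻¹ * (qden x k : ℝ) ^ t) (n : ℕ) :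
    brjunoTailE x n ≤
      ENNReal.ofReal (√2 * (Real.log γ⁻¹ + 2 * t) * (√√2)⁻¹ ^ n / (1 - (√√2)⁻¹)) := by
  have hC : 0 ≤ Real.log γ⁻¹ + 2 * t :=
    add_nonneg (Real.log_nonneg (one_le_inv₀ hγ0 |>.mpr hγ1)) (by positivity)
  refine tsum_ofReal_le_of_le_geometric (by positivity) (by positivity)
    (inv_lt_one_of_one_lt₀ one_lt_sqrt_sqrt_two) (fun k => ?_) n
  calc brjunoTerm x k ≤ (Real.log γ⁻¹ + 2 * t) / √(qden x k) :=
        brjunoTerm_le_div_sqrt_qden hx hγ0 hγ1 ht (hK k)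
    _ ≤ (Real.log γ⁻¹ + 2 * t) * (√2 * (√√2)⁻¹ ^ k) := by
        rw [div_eq_mul_inv]; gcongr; exact inv_sqrt_qden_le hx k
    _ = √2 * (Real.log γ⁻¹ + 2 * t) * (√√2)⁻¹ ^ k := by ring

end ContinuedFraction

/-- the tails of the Brjuno series tend to `0` uniformly on `K_{γ,τ}`;
in particular `K_{γ,τ}` is contained in a set `K*` defined by a vanishing decreasing
sequence, and every point of `K_{γ,τ}` is a Brjuno number. -/
theorem statement18 (τ γ : ℝ) (hτ : 2 ≤ τ) (hγ : γ ∈ Set.Ioo (0 : ℝ) 1) :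
    (Filter.Tendsto
      (fun n => ⨆ x ∈ {x : ℝ | Irrational x ∧
        ∀ k : ℕ, (qden x (k + 1) : ℝ) ≤ γ⁻¹ * (qden x k : ℝ) ^ (τ - 1)},
          brjunoTailE x n)
      Filter.atTop (nhds 0)) ∧
    (∃ Ms : ℕ → ℝ, (∀ n, 0 < Ms n) ∧ Antitone Ms ∧
      Filter.Tendsto Ms Filter.atTop (nhds 0) ∧
      {x : ℝ | Irrational x ∧
        ∀ k : ℕ, (qden x (k + 1) : ℝ) ≤ γ⁻¹ * (qden x k : ℝ) ^ (τ - 1)} ⊆ KstarR Ms) ∧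
    (∀ x ∈ {x : ℝ | Irrational x ∧
        ∀ k : ℕ, (qden x (k + 1) : ℝ) ≤ γ⁻¹ * (qden x k : ℝ) ^ (τ - 1)},
      brjuno x ≠ ⊤) := by
  set ρ : ℝ := (√√2)⁻¹
  have hρ0 : 0 < ρ := by positivity
  have hρ1 : ρ < 1 := inv_lt_one_of_one_lt₀ one_lt_sqrt_sqrt_two
  have hρ : 0 < 1 - ρ := by linarith
  set A : ℝ := √2 * (Real.log γ⁻¹ + 2 * (τ - 1))
  have hA : 0 < A := by
    have := Real.log_nonneg (one_le_inv₀ hγ.1 |>.mpr hγ.2.le)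
    have : 0 < τ - 1 := by linarith
    positivity
  set Ms : ℕ → ℝ := fun n => A * ρ ^ n / (1 - ρ)
  have htail : ∀ x ∈ {x : ℝ | Irrational x ∧
      ∀ k : ℕ, (qden x (k + 1) : ℝ) ≤ γ⁻¹ * (qden x k : ℝ) ^ (τ - 1)},
      ∀ n, brjunoTailE x n ≤ ENNReal.ofReal (Ms n) := fun x hx =>
    brjunoTailE_le_geometric hx.1 hγ.1 hγ.2.le (by linarith) hx.2
  have hMs : Filter.Tendsto Ms Filter.atTop (nhds 0) := by
    simpa [Ms] using
      ((tendsto_pow_atTop_nhds_zero_of_lt_one hρ0.le hρ1).const_mul A).div_const (1 - ρ)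
  refine ⟨?_, ⟨Ms, fun n => ?_, fun m n hmn => ?_, hMs, fun x hx => ⟨hx.1, htail x hx⟩⟩, ?_⟩
  · refine tendsto_of_tendsto_of_tendsto_of_le_of_le tendsto_const_nhds ?_ (fun n => zero_le)
      (fun n => iSup₂_le fun x hx => htail x hx n)
    simpa using ENNReal.tendsto_ofReal hMs
  · positivity
  · exact div_le_div_of_nonneg_right
      (mul_le_mul_of_nonneg_left (pow_le_pow_of_le_one hρ0.le hρ1.le hmn) hA.le) hρ.le
  · intro x hx
    have hB : brjuno x = brjunoTailE x 0 := by simp [brjuno, brjunoTailE, hx.1]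
    exact hB ▸ ((htail x hx 0).trans_lt ENNReal.ofReal_lt_top).ne
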